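/- Let A and B be finite nonempty index types, let φ : A → ℂ be a unit vector with rank-one projection Φ := φ φᴴ, let ω be a density matrix on B, and let τ be a density matrix on A × B. Then F(Φ ⊗ ω, τ) ≤ Re ⟨φ, (Tr₂ τ) · φ⟩, where ⊗ is the Kronecker product and Tr₂ is the partial trace over B. (Monotonicity of fidelity under the partial trace, for a pure first argument with product extension.) -/

import Mathlib

open Matrix Kronecker
open scoped ComplexOrder

open scoped Classical in
noncomputable def matSqrt {n : Type*} [Fintype n] [DecidableEq n] (A : Matrix n n ℂ) :
    Matrix n n ℂ :=
  if h : A.PosSemidef then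
    (h.1.eigenvectorUnitary : Matrix n n ℂ) * diagonal ((↑) ∘ (√·) ∘ h.1.eigenvalues) *
      (star (h.1.eigenvectorUnitary : Matrix n n ℂ))
  else 0

noncomputable def rootFidelity {n : Type*} [Fintype n] [DecidableEq n]
    (ρ σ : Matrix n n ℂ) : ℝ :=
  (matSqrt (matSqrt σ * ρ * matSqrt σ)).trace.re

noncomputable def fidelity {n : Type*} [Fintype n] [DecidableEq n]
    (ρ σ : Matrix n n ℂ) : ℝ :=
  (rootFidelity ρ σ) ^ 2

noncomputable def traceNorm {n : Type*} [Fintype n] [DecidableEq n] (A : Matrix n n ℂ) : ℝ :=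
  (matSqrt (Aᴴ * A)).trace.re

/-- The set of attainable type-II error values in hypothesis testing. -/
def testValues {n : Type*} [Fintype n] [DecidableEq n] (ρ σ : Matrix n n ℂ) (ε : ℝ) :
    Set ℝ :=
  { x | ∃ Λ : Matrix n n ℂ, Λ.PosSemidef ∧ (1 - Λ).PosSemidef ∧
      1 - ε ≤ (Λ * ρ).trace.re ∧ x = (Λ * σ).trace.re }

/-- ε-hypothesis-testing relative entropy. -/
noncomputable def Dh {n : Type*} [Fintype n] [DecidableEq n]
    (ρ σ : Matrix n n ℂ) (ε : ℝ) : ℝ :=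
  - Real.logb 2 (sInf (testValues ρ σ ε))

/-- GHZ unit vector. -/
noncomputable def ghz (M K : ℕ) : (Fin M → Fin K) → ℂ :=
  fun f => if ∃ c, ∀ m, f m = c then ((Real.sqrt K : ℂ))⁻¹ else 0

/-- GHZ rank-one projection. -/
noncomputable def ghzProj (M K : ℕ) : Matrix (Fin M → Fin K) (Fin M → Fin K) ℂ :=
  Matrix.vecMulVec (ghz M K) (star ∘ ghz M K)

/-- The twisting unitary. -/
def twist (M K d : ℕ)
    (U : (Fin M → Fin K) → Matrix (Fin M → Fin d) (Fin M → Fin d) ℂ) :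
    Matrix ((Fin M → Fin K) × (Fin M → Fin d)) ((Fin M → Fin K) × (Fin M → Fin d)) ℂ :=
  Matrix.of fun p q => if p.1 = q.1 then U p.1 p.2 q.2 else 0

/-- The privacy test `Π = W (Φ ⊗ 1) Wᴴ`. -/
noncomputable def privacyTest (M K d : ℕ)
    (U : (Fin M → Fin K) → Matrix (Fin M → Fin d) (Fin M → Fin d) ℂ) :
    Matrix ((Fin M → Fin K) × (Fin M → Fin d)) ((Fin M → Fin K) × (Fin M → Fin d)) ℂ :=
  twist M K d U * (ghzProj M K ⊗ₖ (1 : Matrix (Fin M → Fin d) (Fin M → Fin d) ℂ)) *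
    (twist M K d U)ᴴ

/-- The private state `γ = W (Φ ⊗ ω) Wᴴ`. -/
noncomputable def privateState (M K d : ℕ)
    (U : (Fin M → Fin K) → Matrix (Fin M → Fin d) (Fin M → Fin d) ℂ)
    (ω : Matrix (Fin M → Fin d) (Fin M → Fin d) ℂ) :
    Matrix ((Fin M → Fin K) × (Fin M → Fin d)) ((Fin M → Fin K) × (Fin M → Fin d)) ℂ :=
  twist M K d U * (ghzProj M K ⊗ₖ ω) * (twist M K d U)ᴴ

/-- A vector on `𝒦 × 𝒮` is product across the bipartition `J | Jᶜ` of the parties. -/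
def IsProductAcross {M K d : ℕ} (J : Set (Fin M))
    (v : (Fin M → Fin K) × (Fin M → Fin d) → ℂ) : Prop :=
  ∃ (v₁ : ((↥J) → Fin K) × ((↥J) → Fin d) → ℂ)
    (v₂ : ((↥(Jᶜ)) → Fin K) × ((↥(Jᶜ)) → Fin d) → ℂ),
    ∀ (f : Fin M → Fin K) (x : Fin M → Fin d),
      v (f, x) = v₁ (fun m => f m.1, fun m => x m.1) * v₂ (fun m => f m.1, fun m => x m.1)

/-- Biseparability: a finite convex combination of pure states, each product across
some nontrivial bipartition of the parties. -/
def Biseparable {M K d : ℕ}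
    (σ : Matrix ((Fin M → Fin K) × (Fin M → Fin d))
      ((Fin M → Fin K) × (Fin M → Fin d)) ℂ) : Prop :=
  ∃ (N : ℕ) (p : Fin N → ℝ) (w : Fin N → ((Fin M → Fin K) × (Fin M → Fin d)) → ℂ)
    (J : Fin N → Set (Fin M)),
    (∀ t, 0 ≤ p t) ∧ (∑ t, p t = 1) ∧
    (∀ t, ∑ i, ‖w t i‖ ^ 2 = 1) ∧
    (∀ t, J t ≠ ∅ ∧ J t ≠ Set.univ ∧ IsProductAcross (J t) (w t)) ∧
    σ = ∑ t, (p t : ℂ) • Matrix.vecMulVec (w t) (star ∘ w t)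

/-- Partial trace over the second tensor factor. -/
noncomputable def partialTrace₂ {A B : Type*} [Fintype B] (τ : Matrix (A × B) (A × B) ℂ) :
    Matrix A A ℂ :=
  Matrix.of fun a a' => ∑ b, τ (a, b) (a', b)

/-- Matrix logarithm of a Hermitian matrix via the spectral functional calculus. -/
noncomputable def matLog {n : Type*} [Fintype n] [DecidableEq n] (A : Matrix n n ℂ) :
    Matrix n n ℂ :=
  if hA : A.IsHermitian then
    (hA.eigenvectorUnitary : Matrix n n ℂ) *
      Matrix.diagonal (fun i => (Real.log (hA.eigenvalues i) : ℂ)) *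
      (star hA.eigenvectorUnitary : Matrix n n ℂ)
  else 0

/-!
With `R = √ρ` and `S = √σ`, the root fidelity is the trace norm of `R S`. If `ρ P = ρ` for an
orthogonal projection `P`, then `(R P S)ᴴ (R P S) = S ρ S` as well, so the root fidelity is also
the trace norm of `R (P S)`. The trace norm satisfies the Cauchy–Schwarz bound
`‖X Y‖₁ ^ 2 ≤ Tr (Xᴴ X) · Tr (Yᴴ Y)`, whence `F(ρ, σ) ≤ Tr ρ · Tr (P σ)`. For `ρ = Φ ⊗ ω` and
`P = Φ ⊗ 1` the right-hand side is `⟨φ, (Tr₂ τ) φ⟩`.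

For the Cauchy–Schwarz bound, take an orthonormal eigenbasis `bᵢ` of `(X Y)ᴴ (X Y)`: the vectors
`zᵢ = X Y bᵢ` are pairwise orthogonal and `‖X Y‖₁ = ∑ ‖zᵢ‖`. Since
`‖zᵢ‖ ^ 2 = ⟪Xᴴ zᵢ, Y bᵢ⟫ ≤ ‖Xᴴ zᵢ‖ ‖Y bᵢ‖`, it remains to bound `∑ ‖Xᴴ zᵢ‖ ^ 2 / ‖zᵢ‖ ^ 2`,
which is Bessel's inequality for the normalised family `zᵢ / ‖zᵢ‖`, applied to each vector `X bₖ`.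
-/

open scoped InnerProductSpace

section OrthogonalFamily
variable {𝕜 E ι : Type*} [RCLike 𝕜] [NormedAddCommGroup E] [InnerProductSpace 𝕜 E]

theorem orthonormal_normalize_of_pairwise_inner_eq_zero {z : ι → E}
    (hz : Pairwise fun i j => ⟪z i, z j⟫_𝕜 = 0) :
    Orthonormal 𝕜 fun i : {i // z i ≠ 0} => ((‖z i‖⁻¹ : ℝ) : 𝕜) • z i := by
  classical
  rw [orthonormal_iff_ite]
  rintro ⟨i, hi⟩ ⟨j, hj⟩
  simp only [inner_smul_left, inner_smul_right, RCLike.conj_ofReal, Subtype.mk.injEq]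
  split_ifs with hij
  · subst hij
    have : ‖z i‖ ≠ 0 := norm_ne_zero_iff.mpr hi
    rw [inner_self_eq_norm_sq_to_K]
    norm_cast
    field_simp
  · rw [hz hij, mul_zero, mul_zero]

theorem sum_norm_inner_sq_div_le_of_pairwise [Fintype ι] {z : ι → E}
    (hz : Pairwise fun i j => ⟪z i, z j⟫_𝕜 = 0) (x : E) :
    ∑ i, ‖⟪z i, x⟫_𝕜‖ ^ 2 / ‖z i‖ ^ 2 ≤ ‖x‖ ^ 2 := by
  classical
  calc ∑ i, ‖⟪z i, x⟫_𝕜‖ ^ 2 / ‖z i‖ ^ 2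
      = ∑ i : {i // z i ≠ 0}, ‖⟪((‖z i‖⁻¹ : ℝ) : 𝕜) • z i, x⟫_𝕜‖ ^ 2 := by
        rw [← Finset.sum_filter_of_ne (p := fun i => z i ≠ 0) (by simp +contextual),
          ← Finset.sum_subtype_eq_sum_filter, Finset.subtype_univ]
        refine Finset.sum_congr rfl fun i _ => ?_
        rw [inner_smul_left, norm_mul, RCLike.norm_conj, RCLike.norm_ofReal, abs_inv,
          abs_norm, mul_pow, inv_pow, inv_mul_eq_div]
    _ ≤ ‖x‖ ^ 2 := (orthonormal_normalize_of_pairwise_inner_eq_zero hz).sum_inner_products_le x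

theorem sum_norm_adjoint_sq_div_le [Fintype ι] [FiniteDimensional 𝕜 E] {κ : Type*} [Fintype κ]
    (T : E →ₗ[𝕜] E) (b : OrthonormalBasis κ 𝕜 E) {z : ι → E}
    (hz : Pairwise fun i j => ⟪z i, z j⟫_𝕜 = 0) :
    ∑ i, ‖T.adjoint (z i)‖ ^ 2 / ‖z i‖ ^ 2 ≤ ∑ k, ‖T (b k)‖ ^ 2 := by
  calc ∑ i, ‖T.adjoint (z i)‖ ^ 2 / ‖z i‖ ^ 2
      = ∑ k, ∑ i, ‖⟪z i, T (b k)⟫_𝕜‖ ^ 2 / ‖z i‖ ^ 2 := by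
        simp_rw [← b.sum_sq_norm_inner_right (T.adjoint _), LinearMap.adjoint_inner_right,
          ← norm_inner_symm (T (b _)), Finset.sum_div]
        exact Finset.sum_comm
    _ ≤ ∑ k, ‖T (b k)‖ ^ 2 :=
        Finset.sum_le_sum fun k _ => sum_norm_inner_sq_div_le_of_pairwise hz _

theorem sq_sum_norm_comp_le [Fintype ι] [FiniteDimensional 𝕜 E] (b : OrthonormalBasis ι 𝕜 E)
    (R W : E →ₗ[𝕜] E) (h : Pairwise fun i j => ⟪R (W (b i)), R (W (b j))⟫_𝕜 = 0) :
    (∑ i, ‖R (W (b i))‖) ^ 2 ≤ (∑ i, ‖R (b i)‖ ^ 2) * ∑ i, ‖W (b i)‖ ^ 2 := by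
  set z := fun i => R (W (b i))
  set α := fun i => ‖R.adjoint (z i)‖ / ‖z i‖
  have hle : ∀ i, ‖z i‖ ≤ α i * ‖W (b i)‖ := by
    intro i
    rcases eq_or_ne (z i) 0 with hi | hi
    · simp [hi, α]
    have hpos : 0 < ‖z i‖ := norm_pos_iff.mpr hi
    have : ‖z i‖ ^ 2 ≤ ‖R.adjoint (z i)‖ * ‖W (b i)‖ := by
      calc ‖z i‖ ^ 2 = RCLike.re ⟪R.adjoint (z i), W (b i)⟫_𝕜 := by
            rw [LinearMap.adjoint_inner_left, ← inner_self_eq_norm_sq (𝕜 := 𝕜)]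
        _ ≤ ‖R.adjoint (z i)‖ * ‖W (b i)‖ := re_inner_le_norm _ _
    rw [div_mul_eq_mul_div, le_div_iff₀ hpos]
    nlinarith
  calc (∑ i, ‖z i‖) ^ 2 ≤ (∑ i, α i * ‖W (b i)‖) ^ 2 :=
        pow_le_pow_left₀ (by positivity) (Finset.sum_le_sum fun i _ => hle i) 2
    _ ≤ (∑ i, α i ^ 2) * ∑ i, ‖W (b i)‖ ^ 2 := Finset.sum_mul_sq_le_sq_mul_sq _ _ _
    _ ≤ (∑ i, ‖R (b i)‖ ^ 2) * ∑ i, ‖W (b i)‖ ^ 2 := by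
        refine mul_le_mul_of_nonneg_right ?_ (by positivity)
        simpa only [α, div_pow] using sum_norm_adjoint_sq_div_le R b h

end OrthogonalFamily

namespace Matrix
variable {𝕜 n ι : Type*} [RCLike 𝕜] [Fintype n] [DecidableEq n] [Fintype ι]

theorem trace_toEuclideanLin (A : Matrix n n 𝕜) :
    LinearMap.trace 𝕜 _ (toEuclideanLin A) = A.trace := by
  rw [LinearMap.trace_eq_matrix_trace 𝕜 (EuclideanSpace.basisFun n 𝕜).toBasis,
    toEuclideanLin_eq_toLin_orthonormal, LinearMap.toMatrix_toLin]

theorem re_trace_conjTranspose_mul_self (A : Matrix n n 𝕜)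
    (b : OrthonormalBasis ι 𝕜 (EuclideanSpace 𝕜 n)) :
    RCLike.re (Aᴴ * A).trace = ∑ i, ‖toEuclideanLin A (b i)‖ ^ 2 := by
  rw [← trace_toEuclideanLin, LinearMap.trace_eq_sum_inner _ b, map_sum]
  refine Finset.sum_congr rfl fun i _ => ?_
  rw [toLpLin_mul_same, toEuclideanLin_conjTranspose_eq_adjoint, LinearMap.comp_apply,
    LinearMap.adjoint_inner_right, inner_self_eq_norm_sq]

theorem IsHermitian.toEuclideanLin_eigenvectorBasis {A : Matrix n n 𝕜} (hA : A.IsHermitian)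
    (j : n) :
    toEuclideanLin A (hA.eigenvectorBasis j) = (hA.eigenvalues j : 𝕜) • hA.eigenvectorBasis j := by
  apply WithLp.ofLp_injective
  rw [ofLp_toLpLin, WithLp.ofLp_smul, toLin'_apply, hA.mulVec_eigenvectorBasis,
    RCLike.real_smul_eq_coe_smul (K := 𝕜)]

theorem inner_toEuclideanLin_eigenvectorBasis (Z : Matrix n n 𝕜) (hZ : (Zᴴ * Z).IsHermitian)
    (i j : n) :
    ⟪toEuclideanLin Z (hZ.eigenvectorBasis i), toEuclideanLin Z (hZ.eigenvectorBasis j)⟫_𝕜 =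
      if i = j then (hZ.eigenvalues j : 𝕜) else 0 := by
  rw [← LinearMap.adjoint_inner_right, ← LinearMap.comp_apply,
    ← toEuclideanLin_conjTranspose_eq_adjoint, ← toLpLin_mul_same,
    hZ.toEuclideanLin_eigenvectorBasis, inner_smul_right,
    orthonormal_iff_ite.mp hZ.eigenvectorBasis.orthonormal]
  simp

end Matrix

section TraceNorm
open Matrix
variable {n : Type*} [Fintype n] [DecidableEq n]

theorem traceNorm_eq_sum_norm (Z : Matrix n n ℂ) (hZ : (Zᴴ * Z).IsHermitian) :
    traceNorm Z = ∑ i, ‖toEuclideanLin Z (hZ.eigenvectorBasis i)‖ := by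
  rw [traceNorm, matSqrt, dif_pos (posSemidef_conjTranspose_mul_self Z), trace_mul_cycle,
    Unitary.coe_star_mul_self, one_mul, trace_diagonal, Complex.re_sum]
  refine Finset.sum_congr rfl fun i _ => ?_
  have hsq : ‖toEuclideanLin Z (hZ.eigenvectorBasis i)‖ ^ 2 = hZ.eigenvalues i := by
    rw [← inner_self_eq_norm_sq (𝕜 := ℂ), inner_toEuclideanLin_eigenvectorBasis, if_pos rfl]
    rfl
  simp [← hsq]

theorem traceNorm_mul_sq_le (R W : Matrix n n ℂ) :
    traceNorm (R * W) ^ 2 ≤ (Rᴴ * R).trace.re * (Wᴴ * W).trace.re := by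
  have hZ : ((R * W)ᴴ * (R * W)).IsHermitian := (posSemidef_conjTranspose_mul_self _).1
  rw [traceNorm_eq_sum_norm _ hZ, ← RCLike.re_to_complex, ← RCLike.re_to_complex,
    re_trace_conjTranspose_mul_self R hZ.eigenvectorBasis,
    re_trace_conjTranspose_mul_self W hZ.eigenvectorBasis]
  have horth := inner_toEuclideanLin_eigenvectorBasis (R * W) hZ
  simp only [toLpLin_mul_same, LinearMap.comp_apply] at horth ⊢
  exact sq_sum_norm_comp_le _ _ _ fun i j hij => (horth i j).trans (if_neg hij)

end TraceNorm

namespace Matrix.PosSemidef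
open scoped MatrixOrder
variable {n : Type*} [Fintype n] [DecidableEq n] {A : Matrix n n ℂ}

theorem matSqrt_eq_cfcSqrt (hA : A.PosSemidef) : matSqrt A = CFC.sqrt A := by
  rw [matSqrt, dif_pos hA, CFC.sqrt_eq_real_sqrt A hA.nonneg, cfcₙ_eq_cfc, hA.1.cfc_eq,
    IsHermitian.cfc, Unitary.conjStarAlgAut_apply]
  rfl

theorem isHermitian_matSqrt (hA : A.PosSemidef) : (matSqrt A).IsHermitian := by
  rw [hA.matSqrt_eq_cfcSqrt]
  exact (nonneg_iff_posSemidef.mp (CFC.sqrt_nonneg A)).1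

theorem matSqrt_mul_self (hA : A.PosSemidef) : matSqrt A * matSqrt A = A := by
  rw [hA.matSqrt_eq_cfcSqrt]
  exact CFC.sqrt_mul_sqrt_self A hA.nonneg

end Matrix.PosSemidef

section Fidelity
open Matrix
variable {n : Type*} [Fintype n] [DecidableEq n]

theorem fidelity_le_re_trace_mul_re_trace {ρ σ P : Matrix n n ℂ} (hρ : ρ.PosSemidef)
    (hσ : σ.PosSemidef) (hP : P.IsHermitian) (hPP : P * P = P) (hρP : ρ * P = ρ) :
    fidelity ρ σ ≤ ρ.trace.re * (P * σ).trace.re := by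
  set R := matSqrt ρ
  set S := matSqrt σ
  have hR : Rᴴ = R := hρ.isHermitian_matSqrt
  have hS : Sᴴ = S := hσ.isHermitian_matSqrt
  have hPρ : P * ρ = ρ := by
    simpa only [conjTranspose_mul, hP.eq, hρ.1.eq] using congrArg conjTranspose hρP
  have hZ : (R * (P * S))ᴴ * (R * (P * S)) = S * ρ * S := by
    simp only [conjTranspose_mul, hR, hS, hP.eq, Matrix.mul_assoc]
    rw [← Matrix.mul_assoc R R, hρ.matSqrt_mul_self, ← Matrix.mul_assoc ρ, hρP,
      ← Matrix.mul_assoc P, hPρ]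
  have hPS : (P * S)ᴴ * (P * S) = S * P * S := by
    rw [conjTranspose_mul, hS, hP.eq, Matrix.mul_assoc, ← Matrix.mul_assoc P, hPP,
      Matrix.mul_assoc]
  calc fidelity ρ σ = traceNorm (R * (P * S)) ^ 2 := by rw [fidelity, rootFidelity, traceNorm, hZ]
    _ ≤ (Rᴴ * R).trace.re * ((P * S)ᴴ * (P * S)).trace.re := traceNorm_mul_sq_le _ _
    _ = ρ.trace.re * (P * σ).trace.re := by
      rw [hR, hρ.matSqrt_mul_self, hPS, trace_mul_cycle, hσ.matSqrt_mul_self, trace_mul_comm]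

end Fidelity

section PartialTrace
open Matrix

theorem Matrix.trace_vecMulVec_mul {R n : Type*} [CommSemiring R] [Fintype n] (x y : n → R)
    (M : Matrix n n R) : (vecMulVec x y * M).trace = y ⬝ᵥ M *ᵥ x := by
  rw [vecMulVec_mul, trace_vecMulVec, dotProduct_comm, dotProduct_mulVec]

theorem trace_kronecker_one_mul {A B : Type*} [Fintype A] [Fintype B] [DecidableEq B]
    (M : Matrix A A ℂ) (τ : Matrix (A × B) (A × B) ℂ) :
    ((M ⊗ₖ (1 : Matrix B B ℂ)) * τ).trace = (M * partialTrace₂ τ).trace := by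
  simp only [trace, diag_apply, mul_apply, Fintype.sum_prod_type, kroneckerMap_apply, one_apply,
    mul_ite, mul_one, mul_zero, ite_mul, zero_mul, Finset.sum_ite_eq, Finset.mem_univ, if_true,
    partialTrace₂, of_apply, Finset.mul_sum]
  exact Finset.sum_congr rfl fun a _ => Finset.sum_comm

end PartialTrace

theorem stmt_3_general (A B : Type*) [Fintype A] [DecidableEq A]
    [Fintype B] [DecidableEq B]
    (φ : A → ℂ) (hφ : ∑ a, ‖φ a‖ ^ 2 = 1)
    (ω : Matrix B B ℂ) (hω : ω.PosSemidef) (hωtr : ω.trace = 1)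
    (τ : Matrix (A × B) (A × B) ℂ) (hτ : τ.PosSemidef) :
    fidelity (Matrix.vecMulVec φ (star ∘ φ) ⊗ₖ ω) τ ≤
      (star φ ⬝ᵥ (partialTrace₂ τ).mulVec φ).re := by
  have hunit : star φ ⬝ᵥ φ = 1 := by
    simp only [dotProduct, Pi.star_apply, Complex.star_def, Complex.conj_mul']
    exact_mod_cast hφ
  have hΦ : (vecMulVec φ (star φ)).PosSemidef := posSemidef_vecMulVec_self_star φ
  have hΦΦ : vecMulVec φ (star φ) * vecMulVec φ (star φ) = vecMulVec φ (star φ) := by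
    rw [vecMulVec_mul_vecMulVec, hunit, one_smul]
  calc fidelity (vecMulVec φ (star φ) ⊗ₖ ω) τ
      ≤ (vecMulVec φ (star φ) ⊗ₖ ω).trace.re * ((vecMulVec φ (star φ) ⊗ₖ 1) * τ).trace.re :=
        fidelity_le_re_trace_mul_re_trace (hΦ.kronecker hω) hτ (hΦ.kronecker PosSemidef.one).1
          (by rw [← mul_kronecker_mul, hΦΦ, one_mul])
          (by rw [← mul_kronecker_mul, hΦΦ, mul_one])
    _ = (star φ ⬝ᵥ (partialTrace₂ τ).mulVec φ).re := by
        rw [trace_kronecker, trace_vecMulVec, dotProduct_comm, hunit, hωtr, one_mul, Complex.one_re,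
          one_mul, trace_kronecker_one_mul, trace_vecMulVec_mul]

/-- monotonicity of fidelity under the partial trace, for a pure first
argument with product extension: `F(Φ ⊗ ω, τ) ≤ Re ⟨φ, (Tr₂ τ) φ⟩`. -/
theorem stmt_3 (A B : Type*) [Fintype A] [DecidableEq A] [Nonempty A]
    [Fintype B] [DecidableEq B] [Nonempty B]
    (φ : A → ℂ) (hφ : ∑ a, ‖φ a‖ ^ 2 = 1)
    (ω : Matrix B B ℂ) (hω : ω.PosSemidef) (hωtr : ω.trace = 1)
    (τ : Matrix (A × B) (A × B) ℂ) (hτ : τ.PosSemidef) (hτtr : τ.trace = 1) :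
    fidelity (Matrix.vecMulVec φ (star ∘ φ) ⊗ₖ ω) τ ≤
      (star φ ⬝ᵥ (partialTrace₂ τ).mulVec φ).re :=
  stmt_3_general A B φ hφ ω hω hωtr τ hτ
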